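/- arXiv:2303.00078 — 2 statements merged into one kernel-verified Lean document; each statement's English description precedes it below -/
import Mathlib

section
/- For every integer a ≥ 5, the coin system (1, 2, 3, a, a+1, 2a) is orderly, while its five-value prefix (1, 2, 3, a, a+1) is not orderly (2a is a counterexample). -/
/-- The largest coin value in `C` that is at most `v` (or 0 if none). -/
def coinMax (C : List ℕ) (v : ℕ) : ℕ := (C.filter (· ≤ v)).foldr max 0

/-- Fuelled greedy coin count. -/
def grdAux (C : List ℕ) : ℕ → ℕ → ℕ
  | 0, _ => 0
  | fuel + 1, v =>
    let c := coinMax C v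
    if v = 0 ∨ c = 0 then 0 else 1 + grdAux C fuel (v - c)

/-- Number of coins used by the greedy algorithm to represent `v` with coin system `C`. -/
def grd (C : List ℕ) (v : ℕ) : ℕ := grdAux C v v

/-- The set of sizes of representations of `v` as nonnegative integer combinations of
the coin values in `C`. -/
def reprCosts (C : List ℕ) (v : ℕ) : Set ℕ :=
  {k | ∃ x : List ℕ, x.length = C.length ∧ (List.zipWith (· * ·) x C).sum = v ∧ x.sum = k}

/-- Minimum number of coins needed to represent `v` with coin system `C`. -/
noncomputable def opt (C : List ℕ) (v : ℕ) : ℕ := sInf (reprCosts C v)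

/-- A coin system is orderly if greedy is optimal for every positive value. -/
def Orderly (C : List ℕ) : Prop := ∀ v : ℕ, 0 < v → grd C v = opt C v

/-!
Greedy is optimal as soon as paying any coin `c ≤ v` first costs the greedy algorithm at most
one extra coin, `grd v ≤ grd (v - c) + 1`: peeling coins off an optimal representation one at a
time then bounds `grd v` by its size. For `(1, 2, 3, a, a + 1, 2a)` greedy spends `2a` while it
can, and below `2a` its count has the closed form `⌈v / 3⌉` for `v < a`, `1` for `v ∈ {a, a + 1}`
and `1 + ⌈(v - a - 1) / 3⌉` beyond, so the exchange inequality is a finite case analysis.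
Without the coin `2a`, greedy pays `2a = (a + 1) + 3 + (a - 4)` with at least three coins,
while `a + a` uses two.
-/

section Greedy

variable {C : List ℕ} {v : ℕ}

lemma List.foldr_max_zero_mem {l : List ℕ} (h : l.foldr max 0 ≠ 0) : l.foldr max 0 ∈ l := by
  induction l with
  | nil => exact absurd rfl h
  | cons y l ih =>
    rw [List.foldr_cons] at h ⊢
    rcases max_choice y (l.foldr max 0) with hy | hl
    · rw [hy]; exact List.mem_cons_self
    · rw [hl] at h ⊢; exact List.mem_cons_of_mem _ (ih h)

lemma coinMax_mem (h : coinMax C v ≠ 0) : coinMax C v ∈ C :=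
  (List.mem_filter.mp (List.foldr_max_zero_mem h)).1

lemma coinMax_le (C : List ℕ) (v : ℕ) : coinMax C v ≤ v := by
  by_cases h : coinMax C v = 0
  · rw [h]; exact Nat.zero_le v
  · exact of_decide_eq_true (List.mem_filter.mp (List.foldr_max_zero_mem h)).2

lemma one_le_coinMax (h1 : 1 ∈ C) (hv : 0 < v) : 1 ≤ coinMax C v :=
  List.le_max_of_le' 0 (List.mem_filter.mpr ⟨h1, decide_eq_true hv⟩) le_rfl

lemma grdAux_zero_right (C : List ℕ) (fuel : ℕ) : grdAux C fuel 0 = 0 := by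
  cases fuel <;> rfl

lemma grdAux_eq_of_le (C : List ℕ) :
    ∀ {f₁ f₂ v : ℕ}, v ≤ f₁ → v ≤ f₂ → grdAux C f₁ v = grdAux C f₂ v
  | 0, _, v, h₁, _ => by rw [Nat.le_zero.mp h₁, grdAux_zero_right, grdAux_zero_right]
  | _, 0, v, _, h₂ => by rw [Nat.le_zero.mp h₂, grdAux_zero_right, grdAux_zero_right]
  | f₁ + 1, f₂ + 1, v, h₁, h₂ => by
    simp only [grdAux]
    split_ifs with h
    · rfl
    · push Not at h
      have hc := Nat.pos_of_ne_zero h.2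
      rw [grdAux_eq_of_le C (f₂ := f₂) (by omega) (by omega)]

lemma grd_eq_grd_sub_coinMax_add_one (h1 : 1 ∈ C) (hv : 0 < v) :
    grd C v = grd C (v - coinMax C v) + 1 := by
  have hc := one_le_coinMax h1 hv
  obtain ⟨f, rfl⟩ : ∃ f, v = f + 1 := ⟨v - 1, by omega⟩
  simp only [grd, grdAux]
  rw [if_neg (by omega), grdAux_eq_of_le C (f₂ := f + 1 - coinMax C (f + 1)) (by omega) le_rfl,
    Nat.add_comm]

end Greedy

section Representations

variable {C : List ℕ} {c k v : ℕ}

lemma zero_mem_reprCosts_zero (C : List ℕ) : 0 ∈ reprCosts C 0 := by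
  refine ⟨List.replicate C.length 0, List.length_replicate, ?_, by simp⟩
  induction C with
  | nil => rfl
  | cons d t ih => simpa [List.replicate_succ] using ih

lemma eq_zero_of_zero_mem_reprCosts (h : 0 ∈ reprCosts C v) : v = 0 := by
  obtain ⟨x, -, rfl, hx⟩ := h
  induction x generalizing C with
  | nil => simp
  | cons y x ih =>
    cases C with
    | nil => simp
    | cons d C =>
      simp only [List.sum_cons, Nat.add_eq_zero_iff] at hx
      simp [hx.1, ih hx.2]

lemma add_one_mem_reprCosts_add (hc : c ∈ C) (hk : k ∈ reprCosts C v) :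
    k + 1 ∈ reprCosts C (v + c) := by
  obtain ⟨x, hlen, rfl, rfl⟩ := hk
  induction C generalizing x with
  | nil => simp at hc
  | cons d C ih =>
    obtain _ | ⟨y, x⟩ := x
    · simp at hlen
    simp only [List.length_cons, Nat.add_right_cancel_iff] at hlen
    rcases List.mem_cons.mp hc with rfl | hc
    · refine ⟨(y + 1) :: x, by simp [hlen], ?_, by simp only [List.sum_cons]; ring⟩
      simp only [List.zipWith_cons_cons, List.sum_cons]; ring
    · obtain ⟨z, hz, hval, hsum⟩ := ih hc x hlen
      refine ⟨y :: z, by simp [hz], ?_, ?_⟩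
      · simp only [List.zipWith_cons_cons, List.sum_cons, hval]; ring
      · simp only [List.sum_cons, hsum]; ring

lemma exists_coin_of_add_one_mem_reprCosts (hk : k + 1 ∈ reprCosts C v) :
    ∃ c ∈ C, c ≤ v ∧ k ∈ reprCosts C (v - c) := by
  obtain ⟨x, hlen, rfl, hsum⟩ := hk
  induction C generalizing x k with
  | nil => simp_all
  | cons d C ih =>
    obtain _ | ⟨y, x⟩ := x
    · simp at hlen
    simp only [List.length_cons, Nat.add_right_cancel_iff] at hlen
    simp only [List.sum_cons] at hsum
    obtain rfl | ⟨y, rfl⟩ : y = 0 ∨ ∃ y', y = y' + 1 := by cases y <;> simp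
    · obtain ⟨c, hc, hcv, z, hz, hval, rfl⟩ := ih (k := k) x hlen (by omega)
      refine ⟨c, List.mem_cons_of_mem _ hc, by simpa using hcv, 0 :: z, by simp [hz], ?_, by simp⟩
      simpa using hval
    · refine ⟨d, List.mem_cons_self, ?_, y :: x, by simp [hlen], ?_, ?_⟩ <;>
        simp only [List.zipWith_cons_cons, List.sum_cons, Nat.succ_mul] <;> omega

end Representations

section Orderly

variable {C : List ℕ}

lemma grd_mem_reprCosts (h1 : 1 ∈ C) (v : ℕ) : grd C v ∈ reprCosts C v := by
  induction v using Nat.strong_induction_on with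
  | _ v ih =>
    rcases Nat.eq_zero_or_pos v with rfl | hv
    · exact zero_mem_reprCosts_zero C
    have hc := one_le_coinMax h1 hv
    rw [grd_eq_grd_sub_coinMax_add_one h1 hv]
    simpa [Nat.sub_add_cancel (coinMax_le C v)] using
      add_one_mem_reprCosts_add (coinMax_mem (Nat.one_le_iff_ne_zero.mp hc))
        (ih (v - coinMax C v) (by omega))

lemma grd_le_of_mem_reprCosts
    (hexch : ∀ v c, c ∈ C → c ≤ v → grd C v ≤ grd C (v - c) + 1) :
    ∀ {k v : ℕ}, k ∈ reprCosts C v → grd C v ≤ k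
  | 0, v, hk => by rw [eq_zero_of_zero_mem_reprCosts hk]; exact le_rfl
  | k + 1, v, hk => by
    obtain ⟨c, hc, hcv, hk⟩ := exists_coin_of_add_one_mem_reprCosts hk
    exact (hexch v c hc hcv).trans (Nat.add_le_add_right (grd_le_of_mem_reprCosts hexch hk) 1)

theorem orderly_of_grd_le_grd_sub_add_one (h1 : 1 ∈ C)
    (hexch : ∀ v c, c ∈ C → c ≤ v → grd C v ≤ grd C (v - c) + 1) : Orderly C := fun v _ =>
  (IsLeast.csInf_eq ⟨grd_mem_reprCosts h1 v, fun _ hk => grd_le_of_mem_reprCosts hexch hk⟩).symm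

end Orderly

section SixCoins

variable {a : ℕ}

lemma coinMax_six (ha : 3 ≤ a) (v : ℕ) :
    coinMax [1, 2, 3, a, a + 1, 2 * a] v =
      if 2 * a ≤ v then 2 * a else if a + 1 ≤ v then a + 1 else if a ≤ v then a
      else if 3 ≤ v then 3 else v := by
  simp only [coinMax, List.filter_cons, List.filter_nil, decide_eq_true_eq]
  split_ifs <;> simp only [List.foldr_cons, List.foldr_nil] <;> omega

def grdSixBelow (a v : ℕ) : ℕ :=
  if v < a then (v + 2) / 3 else if v ≤ a + 1 then 1 else 1 + (v - a + 1) / 3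

lemma grd_six_of_lt (ha : 3 ≤ a) {v : ℕ} (hv : v < 2 * a) :
    grd [1, 2, 3, a, a + 1, 2 * a] v = grdSixBelow a v := by
  induction v using Nat.strong_induction_on with
  | _ v ih =>
    rcases Nat.eq_zero_or_pos v with rfl | hv0
    · rw [grd, grdAux_zero_right, grdSixBelow, if_pos (by omega)]
    have hc := one_le_coinMax (C := [1, 2, 3, a, a + 1, 2 * a]) (by simp) hv0
    rw [grd_eq_grd_sub_coinMax_add_one (by simp) hv0, ih _ (by omega) (by omega), coinMax_six ha]
    unfold grdSixBelow
    split_ifs <;> omega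

lemma grd_six_of_le (ha : 3 ≤ a) {v : ℕ} (hv : 2 * a ≤ v) :
    grd [1, 2, 3, a, a + 1, 2 * a] v = grd [1, 2, 3, a, a + 1, 2 * a] (v - 2 * a) + 1 := by
  rw [grd_eq_grd_sub_coinMax_add_one (by simp) (by omega), coinMax_six ha, if_pos hv]

lemma grd_six_le_grd_sub_add_one (ha : 5 ≤ a) {c v : ℕ}
    (hc : c ∈ [1, 2, 3, a, a + 1, 2 * a]) (hcv : c ≤ v) :
    grd [1, 2, 3, a, a + 1, 2 * a] v ≤ grd [1, 2, 3, a, a + 1, 2 * a] (v - c) + 1 := by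
  induction v using Nat.strong_induction_on with
  | _ v ih =>
    have hc' : c = 1 ∨ c = 2 ∨ c = 3 ∨ c = a ∨ c = a + 1 ∨ c = 2 * a := by simpa using hc
    by_cases hvc : 2 * a ≤ v - c
    · rw [grd_six_of_le (by omega) (by omega : 2 * a ≤ v), grd_six_of_le (by omega) hvc,
        show v - c - 2 * a = v - 2 * a - c by omega]
      exact Nat.add_le_add_right (ih _ (by omega) (by omega)) 1
    rw [grd_six_of_lt (by omega) (by omega : v - c < 2 * a)]
    by_cases hv : 2 * a ≤ v
    · rw [grd_six_of_le (by omega) hv, grd_six_of_lt (by omega) (by omega : v - 2 * a < 2 * a)]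
      unfold grdSixBelow
      rcases hc' with rfl | rfl | rfl | rfl | rfl | rfl <;> split_ifs <;> omega
    · rw [grd_six_of_lt (by omega) (by omega : v < 2 * a)]
      unfold grdSixBelow
      rcases hc' with rfl | rfl | rfl | rfl | rfl | rfl <;> split_ifs <;> omega

theorem orderly_six (ha : 5 ≤ a) : Orderly [1, 2, 3, a, a + 1, 2 * a] :=
  orderly_of_grd_le_grd_sub_add_one (by simp) fun _ _ => grd_six_le_grd_sub_add_one ha

end SixCoins

section FiveCoins

variable {a : ℕ}

lemma coinMax_five (ha : 3 ≤ a) (v : ℕ) :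
    coinMax [1, 2, 3, a, a + 1] v =
      if a + 1 ≤ v then a + 1 else if a ≤ v then a else if 3 ≤ v then 3 else v := by
  simp only [coinMax, List.filter_cons, List.filter_nil, decide_eq_true_eq]
  split_ifs <;> simp only [List.foldr_cons, List.foldr_nil] <;> omega

lemma three_le_grd_five (ha : 5 ≤ a) : 3 ≤ grd [1, 2, 3, a, a + 1] (2 * a) := by
  have h1 : 1 ∈ [1, 2, 3, a, a + 1] := by simp
  rw [grd_eq_grd_sub_coinMax_add_one h1 (by omega), coinMax_five (by omega), if_pos (by omega),
    grd_eq_grd_sub_coinMax_add_one h1 (by omega), coinMax_five (by omega), if_neg (by omega),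
    if_neg (by omega), if_pos (by omega), grd_eq_grd_sub_coinMax_add_one h1 (by omega)]
  omega

lemma opt_five_le_two (a : ℕ) : opt [1, 2, 3, a, a + 1] (2 * a) ≤ 2 :=
  Nat.sInf_le ⟨[0, 0, 0, 2, 0], rfl, by simp, rfl⟩

end FiveCoins

theorem stmt_12 (a : ℕ) (ha : 5 ≤ a) :
    Orderly [1, 2, 3, a, a + 1, 2 * a] ∧
    ¬ Orderly [1, 2, 3, a, a + 1] ∧
    opt [1, 2, 3, a, a + 1] (2 * a) < grd [1, 2, 3, a, a + 1] (2 * a) := by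
  have hlt := (opt_five_le_two a).trans_lt (three_le_grd_five ha)
  exact ⟨orderly_six ha, fun h => hlt.ne (h (2 * a) (by omega)).symm, hlt⟩
end

section
/- For integers a ≥ 2 and m with 1 < m ≤ a, the coin system (1, a, 2a, m(2a-1)-(a-1), m(2a-1)+1, (2m-1)(2a-1)+1) is orderly, and its four-value prefix (1, a, 2a, m(2a-1)-(a-1)) is not orderly since 2am is a counterexample. -/
lemma le_foldrMax {l : List ℕ} {c : ℕ} (h : c ∈ l) : c ≤ l.foldr max 0 := by
  induction l with
  | nil => cases h
  | cons b l ih =>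
    rcases List.mem_cons.mp h with rfl | h'
    · exact le_max_left _ _
    · exact le_trans (ih h') (le_max_right _ _)

lemma le_coinMax {C : List ℕ} {v c : ℕ} (hc : c ∈ C) (hcv : c ≤ v) : c ≤ coinMax C v := by
  apply le_foldrMax
  exact List.mem_filter.mpr ⟨hc, by simpa⟩

lemma coinMax_cons (c : ℕ) (C : List ℕ) (v : ℕ) :
    coinMax (c :: C) v = if c ≤ v then max c (coinMax C v) else coinMax C v := by
  simp only [coinMax, List.filter_cons]
  by_cases h : c ≤ v <;> simp [h]

lemma coinMax_nil (v : ℕ) : coinMax [] v = 0 := rfl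

lemma grdAux_congr (C : List ℕ) (h1 : (1:ℕ) ∈ C) :
    ∀ v f1 f2, v ≤ f1 → v ≤ f2 → grdAux C f1 v = grdAux C f2 v := by
  intro v
  induction v using Nat.strong_induction_on with
  | _ v IH =>
    intro f1 f2 h1f h2f
    rcases Nat.eq_zero_or_pos v with rfl | hv
    · cases f1 <;> cases f2 <;> simp [grdAux]
    · have hc : 1 ≤ coinMax C v := le_coinMax h1 hv
      obtain ⟨g1, rfl⟩ : ∃ g, f1 = g + 1 := ⟨f1 - 1, by omega⟩
      obtain ⟨g2, rfl⟩ : ∃ g, f2 = g + 1 := ⟨f2 - 1, by omega⟩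
      simp only [grdAux]
      rw [if_neg (by omega), if_neg (by omega)]
      have := IH (v - coinMax C v) (by omega) g1 g2 (by omega) (by omega)
      omega

lemma grd_step {C : List ℕ} (h1 : (1:ℕ) ∈ C) {v : ℕ} (hv : 0 < v) :
    grd C v = 1 + grd C (v - coinMax C v) := by
  have hc : 1 ≤ coinMax C v := le_coinMax h1 hv
  obtain ⟨w, rfl⟩ : ∃ w, v = w + 1 := ⟨v - 1, by omega⟩
  show grdAux C (w+1) (w+1) = 1 + grd C (w + 1 - coinMax C (w+1))
  simp only [grdAux]
  rw [if_neg (by omega)]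
  congr 1
  exact grdAux_congr C h1 _ _ _ (by omega) le_rfl

lemma grd_zero (C : List ℕ) : grd C 0 = 0 := rfl

lemma grd_ones {C : List ℕ} (h1 : (1:ℕ) ∈ C) {a : ℕ}
    (hcm : ∀ w : ℕ, 0 < w → w < a → coinMax C w = 1) :
    ∀ v, v < a → grd C v = v := by
  intro v
  induction v using Nat.strong_induction_on with
  | _ v IH =>
    intro hva
    rcases Nat.eq_zero_or_pos v with rfl | hv
    · rfl
    · rw [grd_step h1 hv, hcm v hv hva, IH (v-1) (by omega) (by omega)]
      omega

lemma sub_mul_helper (p q r : ℕ) (h : q ≤ p) : (p - q) * r + q * r = p * r := by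
  rw [← add_mul, Nat.sub_add_cancel h]







lemma mem_reprCosts6 {c0 c1 c2 c3 c4 c5 v k : ℕ} :
    k ∈ reprCosts [c0,c1,c2,c3,c4,c5] v ↔
    ∃ x0 x1 x2 x3 x4 x5 : ℕ,
      x0*c0 + x1*c1 + x2*c2 + x3*c3 + x4*c4 + x5*c5 = v ∧ x0+x1+x2+x3+x4+x5 = k := by
  constructor
  · rintro ⟨x, hlen, hsum, hk⟩
    rcases x with _|⟨x0,_|⟨x1,_|⟨x2,_|⟨x3,_|⟨x4,_|⟨x5,_|⟨x6,xs⟩⟩⟩⟩⟩⟩⟩ <;> simp_all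
    refine ⟨x0,x1,x2,x3,x4,x5, by omega, by omega⟩
  · rintro ⟨x0,x1,x2,x3,x4,x5, h1, h2⟩
    refine ⟨[x0,x1,x2,x3,x4,x5], rfl, ?_, ?_⟩ <;> simp <;> omega

lemma mem_reprCosts4 {c0 c1 c2 c3 v k : ℕ} :
    k ∈ reprCosts [c0,c1,c2,c3] v ↔
    ∃ x0 x1 x2 x3 : ℕ,
      x0*c0 + x1*c1 + x2*c2 + x3*c3 = v ∧ x0+x1+x2+x3 = k := by
  constructor
  · rintro ⟨x, hlen, hsum, hk⟩
    rcases x with _|⟨x0,_|⟨x1,_|⟨x2,_|⟨x3,_|⟨x4,xs⟩⟩⟩⟩⟩ <;> simp_all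
    refine ⟨x0,x1,x2,x3, by omega, by omega⟩
  · rintro ⟨x0,x1,x2,x3, h1, h2⟩
    refine ⟨[x0,x1,x2,x3], rfl, ?_, ?_⟩ <;> simp <;> omega

section Windows
variable (a m t d e f : ℕ)

lemma cm6_1 (ha : 2 ≤ a) (ht : 4*a ≤ t + 2)
    (hd : d + a = t + 1) (he : e = t + 1) (hf : f + 2*a = 2*t + 2)
    {v : ℕ} (h1 : 0 < v) (h2 : v < a) : coinMax [1,a,2*a,d,e,f] v = 1 := by
  simp only [coinMax_cons, coinMax_nil]
  split_ifs <;> omega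

lemma cm6_2 (ha : 2 ≤ a) (ht : 4*a ≤ t + 2)
    (hd : d + a = t + 1) (he : e = t + 1) (hf : f + 2*a = 2*t + 2)
    {v : ℕ} (h1 : a ≤ v) (h2 : v < 2*a) : coinMax [1,a,2*a,d,e,f] v = a := by
  simp only [coinMax_cons, coinMax_nil]
  split_ifs <;> omega

lemma cm6_3 (ha : 2 ≤ a) (ht : 4*a ≤ t + 2)
    (hd : d + a = t + 1) (he : e = t + 1) (hf : f + 2*a = 2*t + 2)
    {v : ℕ} (h1 : 2*a ≤ v) (h2 : v < d) : coinMax [1,a,2*a,d,e,f] v = 2*a := by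
  simp only [coinMax_cons, coinMax_nil]
  split_ifs <;> omega

lemma cm6_4 (ha : 2 ≤ a) (ht : 4*a ≤ t + 2)
    (hd : d + a = t + 1) (he : e = t + 1) (hf : f + 2*a = 2*t + 2)
    {v : ℕ} (h1 : d ≤ v) (h2 : v < e) : coinMax [1,a,2*a,d,e,f] v = d := by
  simp only [coinMax_cons, coinMax_nil]
  split_ifs <;> omega

lemma cm6_5 (ha : 2 ≤ a) (ht : 4*a ≤ t + 2)
    (hd : d + a = t + 1) (he : e = t + 1) (hf : f + 2*a = 2*t + 2)
    {v : ℕ} (h1 : e ≤ v) (h2 : v < f) : coinMax [1,a,2*a,d,e,f] v = e := by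
  simp only [coinMax_cons, coinMax_nil]
  split_ifs <;> omega

lemma cm6_6 (ha : 2 ≤ a) (ht : 4*a ≤ t + 2)
    (hd : d + a = t + 1) (he : e = t + 1) (hf : f + 2*a = 2*t + 2)
    {v : ℕ} (h1 : f ≤ v) : coinMax [1,a,2*a,d,e,f] v = f := by
  simp only [coinMax_cons, coinMax_nil]
  split_ifs <;> omega

lemma cm4_1 (ha : 2 ≤ a) (ht : 4*a ≤ t + 2) (hd : d + a = t + 1)
    {v : ℕ} (h1 : 0 < v) (h2 : v < a) : coinMax [1,a,2*a,d] v = 1 := by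
  simp only [coinMax_cons, coinMax_nil]
  split_ifs <;> omega

lemma cm4_2 (ha : 2 ≤ a) (ht : 4*a ≤ t + 2) (hd : d + a = t + 1)
    {v : ℕ} (h1 : a ≤ v) (h2 : v < 2*a) : coinMax [1,a,2*a,d] v = a := by
  simp only [coinMax_cons, coinMax_nil]
  split_ifs <;> omega

lemma cm4_4 (ha : 2 ≤ a) (ht : 4*a ≤ t + 2) (hd : d + a = t + 1)
    {v : ℕ} (h1 : d ≤ v) : coinMax [1,a,2*a,d] v = d := by
  simp only [coinMax_cons, coinMax_nil]
  split_ifs <;> omega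

end Windows
lemma grd_le_rep (a m t d e f : ℕ) (ha : 2 ≤ a) (hm : 2 ≤ m) (hma : m ≤ a)
    (ht : 4*a ≤ t + 2) (htm : 2*a*m = t + m)
    (hd : d + a = t + 1) (he : e = t + 1) (hf : f + 2*a = 2*t + 2) :
    ∀ n v x0 x1 x2 x3 x4 x5 : ℕ,
      v + (x0+x1+x2+x3+x4+x5) ≤ n →
      x0 + x1*a + x2*(2*a) + x3*d + x4*e + x5*f = v →
      grd [1,a,2*a,d,e,f] v ≤ x0+x1+x2+x3+x4+x5 := by
  have h1C : (1:ℕ) ∈ [1,a,2*a,d,e,f] := by simp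
  have f1 : m*(2*a) = t + m := (mul_comm m (2*a)).trans htm
  intro n
  induction n using Nat.strong_induction_on with
  | _ n IH =>
    intro v x0 x1 x2 x3 x4 x5 hn heq
    rcases Nat.eq_zero_or_pos v with rfl | hv
    · rw [grd_zero]; exact Nat.zero_le _
    by_cases hr1 : a ≤ x0
    · have h' : (x1+1)*a = x1*a + a := by ring
      have heq' : (x0 - a) + (x1+1)*a + x2*(2*a) + x3*d + x4*e + x5*f = v := by omega
      have := IH (v + ((x0-a)+(x1+1)+x2+x3+x4+x5)) (by omega) v _ _ _ _ _ _ le_rfl heq'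
      omega
    by_cases hr2 : 2 ≤ x1
    · have h' : (x1-2)*a + 2*a = x1*a := sub_mul_helper x1 2 a hr2
      have h'' : (x2+1)*(2*a) = x2*(2*a) + 2*a := by ring
      have heq' : x0 + (x1-2)*a + (x2+1)*(2*a) + x3*d + x4*e + x5*f = v := by omega
      have := IH (v + (x0+(x1-2)+(x2+1)+x3+x4+x5)) (by omega) v _ _ _ _ _ _ le_rfl heq'
      omega
    by_cases hr3 : 2 ≤ x3
    · have h' : (x3-2)*d + 2*d = x3*d := sub_mul_helper x3 2 d hr3
      have h'' : (x5+1)*f = x5*f + f := by ring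
      have heq' : x0 + x1*a + x2*(2*a) + (x3-2)*d + x4*e + (x5+1)*f = v := by omega
      have := IH (v + (x0+x1+x2+(x3-2)+x4+(x5+1))) (by omega) v _ _ _ _ _ _ le_rfl heq'
      omega
    push_neg at hr1 hr2 hr3
    have key : ∀ c : ℕ, coinMax [1,a,2*a,d,e,f] v = c → 1 ≤ c → c ≤ v →
        ∀ y0 y1 y2 y3 y4 y5 : ℕ,
          y0 + y1*a + y2*(2*a) + y3*d + y4*e + y5*f = v - c →
          y0+y1+y2+y3+y4+y5 + 1 ≤ x0+x1+x2+x3+x4+x5 →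
          grd [1,a,2*a,d,e,f] v ≤ x0+x1+x2+x3+x4+x5 := by
      intro c hc hc1 hcv y0 y1 y2 y3 y4 y5 hyeq hysum
      rw [grd_step h1C hv, hc]
      have h := IH ((v - c) + (y0+y1+y2+y3+y4+y5)) (by omega) (v-c) _ _ _ _ _ _ le_rfl hyeq
      omega
    have hzero : ∀ (q c : ℕ), v < c → q * c ≤ v → q = 0 := by
      intro q c hvc hqc
      rcases Nat.eq_zero_or_pos q with h | h
      · exact h
      · exfalso
        have := Nat.le_mul_of_pos_left c h
        omega
    rcases Nat.lt_or_ge v a with hw1 | hw1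
    · -- W1 : v < a
      have h1' : x1 = 0 := hzero x1 a (by omega) (by omega)
      have h2' : x2 = 0 := hzero x2 (2*a) (by omega) (by omega)
      have h3' : x3 = 0 := hzero x3 d (by omega) (by omega)
      have h4' : x4 = 0 := hzero x4 e (by omega) (by omega)
      have h5' : x5 = 0 := hzero x5 f (by omega) (by omega)
      subst h1' h2' h3' h4' h5'
      rw [grd_ones h1C (fun w hw hwa =>
        cm6_1 (ha := ha) (ht := ht) (hd := hd) (he := he) (hf := hf) (h1 := hw) (h2 := hwa)) v hw1]
      omega
    rcases Nat.lt_or_ge v (2*a) with hw2 | hw2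
    · -- W2 : a ≤ v < 2a
      have h2' : x2 = 0 := hzero x2 (2*a) (by omega) (by omega)
      have h3' : x3 = 0 := hzero x3 d (by omega) (by omega)
      have h4' : x4 = 0 := hzero x4 e (by omega) (by omega)
      have h5' : x5 = 0 := hzero x5 f (by omega) (by omega)
      subst h2' h3' h4' h5'
      rcases (show x1 = 0 ∨ x1 = 1 from by omega) with hx1|hx1 <;> subst hx1
      · exfalso; omega
      · exact key a (cm6_2 (ha := ha) (ht := ht) (hd := hd) (he := he) (hf := hf)
          (h1 := hw1) (h2 := hw2)) (by omega) (by omega) x0 0 0 0 0 0 (by omega) (by omega)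
    rcases Nat.lt_or_ge v d with hw3 | hw3
    · -- W3 : 2a ≤ v < d
      have h3' : x3 = 0 := hzero x3 d (by omega) (by omega)
      have h4' : x4 = 0 := hzero x4 e (by omega) (by omega)
      have h5' : x5 = 0 := hzero x5 f (by omega) (by omega)
      subst h3' h4' h5'
      have hx1a : x1*a ≤ 1*a := Nat.mul_le_mul_right a (by omega)
      have hx2 : 1 ≤ x2 := by
        rcases Nat.eq_zero_or_pos x2 with h | h
        · exfalso; subst h; omega
        · exact h
      have hs := sub_mul_helper x2 1 (2*a) hx2
      exact key (2*a) (cm6_3 (ha := ha) (ht := ht) (hd := hd) (he := he) (hf := hf)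
        (h1 := hw2) (h2 := hw3)) (by omega) (by omega) x0 x1 (x2-1) 0 0 0 (by omega) (by omega)
    rcases Nat.lt_or_ge v e with hw4 | hw4
    · -- W4 : d ≤ v < e
      have h4' : x4 = 0 := hzero x4 e (by omega) (by omega)
      have h5' : x5 = 0 := hzero x5 f (by omega) (by omega)
      subst h4' h5'
      rcases Nat.eq_zero_or_pos x3 with h3 | h3
      · subst h3
        have hub : x2 + 1 ≤ m := by
          by_contra h
          have hx2m : m ≤ x2 := by omega
          have := Nat.mul_le_mul_right (2*a) hx2m
          omega
        have hlb : m ≤ x2 + 1 := by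
          by_contra h
          have hx2m : x2 ≤ m - 2 := by omega
          have hmul := Nat.mul_le_mul_right (2*a) hx2m
          have hs := sub_mul_helper m 2 (2*a) hm
          have hx1a : x1*a ≤ 1*a := Nat.mul_le_mul_right a (by omega)
          omega
        have hx2 : x2 + 1 = m := by omega
        have hlink : (x2+1)*(2*a) = x2*(2*a) + 2*a := by ring
        have hlink2 : (x2+1)*(2*a) = m*(2*a) := by rw [hx2]
        rcases (show x1 = 0 ∨ x1 = 1 from by omega) with hx1|hx1 <;> subst hx1 <;>
          exact key d (cm6_4 (ha := ha) (ht := ht) (hd := hd) (he := he) (hf := hf)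
            (h1 := hw3) (h2 := hw4)) (by omega) (by omega) (v - d) 0 0 0 0 0 (by omega) (by omega)
      · have hx3 : x3 = 1 := by omega
        subst hx3
        exact key d (cm6_4 (ha := ha) (ht := ht) (hd := hd) (he := he) (hf := hf)
          (h1 := hw3) (h2 := hw4)) (by omega) (by omega) x0 x1 x2 0 0 0 (by omega) (by omega)
    rcases Nat.lt_or_ge v f with hw5 | hw5
    · -- W5 : e ≤ v < f
      have h5' : x5 = 0 := hzero x5 f (by omega) (by omega)
      subst h5'
      rcases Nat.eq_zero_or_pos x4 with h4 | h4
      · subst h4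
        rcases Nat.eq_zero_or_pos x3 with h3 | h3
        · subst h3
          have hlb : m ≤ x2 + 1 := by
            by_contra h
            have hx2m : x2 ≤ m - 2 := by omega
            have hmul := Nat.mul_le_mul_right (2*a) hx2m
            have hs := sub_mul_helper m 2 (2*a) hm
            have hx1a : x1*a ≤ 1*a := Nat.mul_le_mul_right a (by omega)
            omega
          rcases Nat.lt_or_ge x2 m with hx2m | hx2m
          · have hx2 : x2 + 1 = m := by omega
            have hlink : (x2+1)*(2*a) = x2*(2*a) + 2*a := by ring
            have hlink2 : (x2+1)*(2*a) = m*(2*a) := by rw [hx2]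
            rcases (show x1 = 0 ∨ x1 = 1 from by omega) with hx1|hx1 <;> subst hx1
            · exfalso; omega
            · exact key e (cm6_5 (ha := ha) (ht := ht) (hd := hd) (he := he) (hf := hf)
                (h1 := hw4) (h2 := hw5)) (by omega) (by omega)
                (x0 + m - (a+1)) 0 0 0 0 0 (by omega) (by omega)
          · have hs := sub_mul_helper x2 m (2*a) hx2m
            exact key e (cm6_5 (ha := ha) (ht := ht) (hd := hd) (he := he) (hf := hf)
              (h1 := hw4) (h2 := hw5)) (by omega) (by omega)
              (x0 + m - 1) x1 (x2 - m) 0 0 0 (by omega) (by omega)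
        · have hx3 : x3 = 1 := by omega
          subst hx3
          rcases (show x1 = 0 ∨ x1 = 1 from by omega) with hx1|hx1 <;> subst hx1
          · rcases Nat.eq_zero_or_pos x2 with h2 | h2
            · exfalso; subst h2; omega
            · have hs := sub_mul_helper x2 1 (2*a) h2
              exact key e (cm6_5 (ha := ha) (ht := ht) (hd := hd) (he := he) (hf := hf)
                (h1 := hw4) (h2 := hw5)) (by omega) (by omega)
                x0 1 (x2-1) 0 0 0 (by omega) (by omega)
          · exact key e (cm6_5 (ha := ha) (ht := ht) (hd := hd) (he := he) (hf := hf)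
              (h1 := hw4) (h2 := hw5)) (by omega) (by omega)
              x0 0 x2 0 0 0 (by omega) (by omega)
      · have hx4 : x4 = 1 := by
          by_contra h
          have h2 : 2 ≤ x4 := by omega
          have := Nat.mul_le_mul_right e h2
          omega
        subst hx4
        exact key e (cm6_5 (ha := ha) (ht := ht) (hd := hd) (he := he) (hf := hf)
          (h1 := hw4) (h2 := hw5)) (by omega) (by omega)
          x0 x1 x2 x3 0 0 (by omega) (by omega)
    · -- W6 : f ≤ v
      rcases Nat.eq_zero_or_pos x5 with h5 | h5
      swap
      · have hs := sub_mul_helper x5 1 f h5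
        exact key f (cm6_6 (ha := ha) (ht := ht) (hd := hd) (he := he) (hf := hf)
          (h1 := hw5)) (by omega) hw5 x0 x1 x2 x3 x4 (x5-1) (by omega) (by omega)
      subst h5
      rcases Nat.lt_or_ge x4 2 with hx4lt | hx4ge
      swap
      · have hs := sub_mul_helper x4 2 e hx4ge
        have hl : (x2+1)*(2*a) = x2*(2*a) + 2*a := by ring
        exact key f (cm6_6 (ha := ha) (ht := ht) (hd := hd) (he := he) (hf := hf)
          (h1 := hw5)) (by omega) hw5 x0 x1 (x2+1) x3 (x4-2) 0 (by omega) (by omega)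
      rcases Nat.eq_zero_or_pos x4 with h4 | h4
      swap
      · have hx4 : x4 = 1 := by omega
        subst hx4
        rcases Nat.eq_zero_or_pos x3 with h3 | h3
        swap
        · have hx3 : x3 = 1 := by omega
          subst hx3
          have hl : (x1+1)*a = x1*a + a := by ring
          exact key f (cm6_6 (ha := ha) (ht := ht) (hd := hd) (he := he) (hf := hf)
            (h1 := hw5)) (by omega) hw5 x0 (x1+1) x2 0 0 0 (by omega) (by omega)
        · subst h3
          rcases (show m ≤ x2 + 1 ∨ x2 + 2 = m ∨ x2 + 3 ≤ m from by omega) with hc2|hc2|hc2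
          · have hs := sub_mul_helper (x2+1) m (2*a) hc2
            have hl : (x2+1)*(2*a) = x2*(2*a) + 2*a := by ring
            exact key f (cm6_6 (ha := ha) (ht := ht) (hd := hd) (he := he) (hf := hf)
              (h1 := hw5)) (by omega) hw5 (x0 + m - 1) x1 (x2+1-m) 0 0 0 (by omega) (by omega)
          · have hl : (x2+2)*(2*a) = x2*(2*a) + 2*(2*a) := by ring
            have hl2 : (x2+2)*(2*a) = m*(2*a) := by rw [hc2]
            rcases (show x1 = 0 ∨ x1 = 1 from by omega) with hx1|hx1 <;> subst hx1
            · exfalso; omega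
            · exact key f (cm6_6 (ha := ha) (ht := ht) (hd := hd) (he := he) (hf := hf)
                (h1 := hw5)) (by omega) hw5 (x0 + m - (a+1)) 0 0 0 0 0 (by omega) (by omega)
          · exfalso
            have hmul := Nat.mul_le_mul_right (2*a) (show x2 ≤ m - 3 from by omega)
            have hs := sub_mul_helper m 3 (2*a) (by omega)
            have hx1a : x1*a ≤ 1*a := Nat.mul_le_mul_right a (by omega)
            omega
      · subst h4
        rcases Nat.eq_zero_or_pos x3 with h3 | h3
        swap
        · have hx3 : x3 = 1 := by omega
          subst hx3
          rcases (show m ≤ x2 ∨ x2 + 1 = m ∨ x2 + 2 ≤ m from by omega) with hc2|hc2|hc2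
          · have hs := sub_mul_helper x2 m (2*a) hc2
            have hl : (x1+1)*a = x1*a + a := by ring
            exact key f (cm6_6 (ha := ha) (ht := ht) (hd := hd) (he := he) (hf := hf)
              (h1 := hw5)) (by omega) hw5 (x0 + m - 1) (x1+1) (x2-m) 0 0 0 (by omega) (by omega)
          · have hl : (x2+1)*(2*a) = x2*(2*a) + 2*a := by ring
            have hl2 : (x2+1)*(2*a) = m*(2*a) := by rw [hc2]
            rcases (show x1 = 0 ∨ x1 = 1 from by omega) with hx1|hx1 <;> subst hx1
            · exact key f (cm6_6 (ha := ha) (ht := ht) (hd := hd) (he := he) (hf := hf)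
                (h1 := hw5)) (by omega) hw5 (x0 + m - (a+1)) 0 0 0 0 0 (by omega) (by omega)
            · exact key f (cm6_6 (ha := ha) (ht := ht) (hd := hd) (he := he) (hf := hf)
                (h1 := hw5)) (by omega) hw5 (x0 + m - 1) 0 0 0 0 0 (by omega) (by omega)
          · exfalso
            have hmul := Nat.mul_le_mul_right (2*a) (show x2 ≤ m - 2 from by omega)
            have hs := sub_mul_helper m 2 (2*a) hm
            have hx1a : x1*a ≤ 1*a := Nat.mul_le_mul_right a (by omega)
            omega
        · subst h3
          rcases (show 2*m ≤ x2 + 1 ∨ x2 + 2 = 2*m ∨ x2 + 3 ≤ 2*m from by omega) with hc2|hc2|hc2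
          · have hs := sub_mul_helper (x2+1) (2*m) (2*a) hc2
            have hl : (x2+1)*(2*a) = x2*(2*a) + 2*a := by ring
            have f2 : 2*m*(2*a) = 2*t + 2*m := by
              have h2 : 2*m*(2*a) = 2*(m*(2*a)) := by ring
              omega
            exact key f (cm6_6 (ha := ha) (ht := ht) (hd := hd) (he := he) (hf := hf)
              (h1 := hw5)) (by omega) hw5 (x0 + 2*m - 2) x1 (x2+1-2*m) 0 0 0 (by omega) (by omega)
          · have hl : (x2+2)*(2*a) = x2*(2*a) + 2*(2*a) := by ring
            have hl2 : (x2+2)*(2*a) = 2*m*(2*a) := by rw [hc2]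
            have f2 : 2*m*(2*a) = 2*t + 2*m := by
              have h2 : 2*m*(2*a) = 2*(m*(2*a)) := by ring
              omega
            rcases (show x1 = 0 ∨ x1 = 1 from by omega) with hx1|hx1 <;> subst hx1
            · exact key f (cm6_6 (ha := ha) (ht := ht) (hd := hd) (he := he) (hf := hf)
                (h1 := hw5)) (by omega) hw5 (x0 + 2*m - (2*a+2)) 0 0 0 0 0 (by omega) (by omega)
            · exact key f (cm6_6 (ha := ha) (ht := ht) (hd := hd) (he := he) (hf := hf)
                (h1 := hw5)) (by omega) hw5 (x0 + 2*m - (a+2)) 0 0 0 0 0 (by omega) (by omega)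
          · exfalso
            have hmul := Nat.mul_le_mul_right (2*a) (show x2 ≤ 2*m - 3 from by omega)
            have hs := sub_mul_helper (2*m) 3 (2*a) (by omega)
            have f2 : 2*m*(2*a) = 2*t + 2*m := by
              have h2 : 2*m*(2*a) = 2*(m*(2*a)) := by ring
              omega
            have hx1a : x1*a ≤ 1*a := Nat.mul_le_mul_right a (by omega)
            omega
lemma grd_rep (a m t d e f : ℕ) (ha : 2 ≤ a) (hm : 2 ≤ m) (hma : m ≤ a)
    (ht : 4*a ≤ t + 2) (htm : 2*a*m = t + m)
    (hd : d + a = t + 1) (he : e = t + 1) (hf : f + 2*a = 2*t + 2) :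
    ∀ v, ∃ x0 x1 x2 x3 x4 x5 : ℕ,
      x0 + x1*a + x2*(2*a) + x3*d + x4*e + x5*f = v ∧
      x0+x1+x2+x3+x4+x5 = grd [1,a,2*a,d,e,f] v := by
  have h1C : (1:ℕ) ∈ [1,a,2*a,d,e,f] := by simp
  intro v
  induction v using Nat.strong_induction_on with
  | _ v IH =>
    rcases Nat.eq_zero_or_pos v with rfl | hv
    · exact ⟨0,0,0,0,0,0, by omega, by rw [grd_zero]⟩
    rcases Nat.lt_or_ge v a with hw1 | hw1
    · refine ⟨v, 0,0,0,0,0, by omega, ?_⟩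
      rw [grd_ones h1C (fun w hw hwa =>
        cm6_1 (ha := ha) (ht := ht) (hd := hd) (he := he) (hf := hf) (h1 := hw) (h2 := hwa)) v hw1]
      omega
    rcases Nat.lt_or_ge v (2*a) with hw2 | hw2
    · obtain ⟨y0,y1,y2,y3,y4,y5,hye,hys⟩ := IH (v - a) (by omega)
      have hstep : grd [1,a,2*a,d,e,f] v = 1 + grd [1,a,2*a,d,e,f] (v - a) := by
        rw [grd_step h1C hv, cm6_2 (ha := ha) (ht := ht) (hd := hd) (he := he) (hf := hf)
          (h1 := hw1) (h2 := hw2)]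
      have hl : (y1+1)*a = y1*a + a := by ring
      exact ⟨y0, y1+1, y2, y3, y4, y5, by omega, by omega⟩
    rcases Nat.lt_or_ge v d with hw3 | hw3
    · obtain ⟨y0,y1,y2,y3,y4,y5,hye,hys⟩ := IH (v - 2*a) (by omega)
      have hstep : grd [1,a,2*a,d,e,f] v = 1 + grd [1,a,2*a,d,e,f] (v - 2*a) := by
        rw [grd_step h1C hv, cm6_3 (ha := ha) (ht := ht) (hd := hd) (he := he) (hf := hf)
          (h1 := hw2) (h2 := hw3)]
      have hl : (y2+1)*(2*a) = y2*(2*a) + 2*a := by ring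
      exact ⟨y0, y1, y2+1, y3, y4, y5, by omega, by omega⟩
    rcases Nat.lt_or_ge v e with hw4 | hw4
    · obtain ⟨y0,y1,y2,y3,y4,y5,hye,hys⟩ := IH (v - d) (by omega)
      have hstep : grd [1,a,2*a,d,e,f] v = 1 + grd [1,a,2*a,d,e,f] (v - d) := by
        rw [grd_step h1C hv, cm6_4 (ha := ha) (ht := ht) (hd := hd) (he := he) (hf := hf)
          (h1 := hw3) (h2 := hw4)]
      have hl : (y3+1)*d = y3*d + d := by ring
      exact ⟨y0, y1, y2, y3+1, y4, y5, by omega, by omega⟩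
    rcases Nat.lt_or_ge v f with hw5 | hw5
    · obtain ⟨y0,y1,y2,y3,y4,y5,hye,hys⟩ := IH (v - e) (by omega)
      have hstep : grd [1,a,2*a,d,e,f] v = 1 + grd [1,a,2*a,d,e,f] (v - e) := by
        rw [grd_step h1C hv, cm6_5 (ha := ha) (ht := ht) (hd := hd) (he := he) (hf := hf)
          (h1 := hw4) (h2 := hw5)]
      have hl : (y4+1)*e = y4*e + e := by ring
      exact ⟨y0, y1, y2, y3, y4+1, y5, by omega, by omega⟩
    · obtain ⟨y0,y1,y2,y3,y4,y5,hye,hys⟩ := IH (v - f) (by omega)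
      have hstep : grd [1,a,2*a,d,e,f] v = 1 + grd [1,a,2*a,d,e,f] (v - f) := by
        rw [grd_step h1C hv, cm6_6 (ha := ha) (ht := ht) (hd := hd) (he := he) (hf := hf)
          (h1 := hw5)]
      have hl : (y5+1)*f = y5*f + f := by ring
      exact ⟨y0, y1, y2, y3, y4, y5+1, by omega, by omega⟩

lemma orderly6 (a m t d e f : ℕ) (ha : 2 ≤ a) (hm : 2 ≤ m) (hma : m ≤ a)
    (ht : 4*a ≤ t + 2) (htm : 2*a*m = t + m)
    (hd : d + a = t + 1) (he : e = t + 1) (hf : f + 2*a = 2*t + 2) :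
    Orderly [1,a,2*a,d,e,f] := by
  intro v hv
  obtain ⟨x0,x1,x2,x3,x4,x5, hxe, hxs⟩ := grd_rep a m t d e f ha hm hma ht htm hd he hf v
  have hmem : grd [1,a,2*a,d,e,f] v ∈ reprCosts [1,a,2*a,d,e,f] v :=
    mem_reprCosts6.mpr ⟨x0,x1,x2,x3,x4,x5, by omega, hxs⟩
  have hne : (reprCosts [1,a,2*a,d,e,f] v).Nonempty := ⟨_, hmem⟩
  have hopt : opt [1,a,2*a,d,e,f] v ∈ reprCosts [1,a,2*a,d,e,f] v := Nat.sInf_mem hne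
  obtain ⟨y0,y1,y2,y3,y4,y5, hye, hys⟩ := mem_reprCosts6.mp hopt
  have hle := grd_le_rep a m t d e f ha hm hma ht htm hd he hf
    (v + (y0+y1+y2+y3+y4+y5)) v y0 y1 y2 y3 y4 y5 le_rfl (by omega)
  have hge : opt [1,a,2*a,d,e,f] v ≤ grd [1,a,2*a,d,e,f] v := Nat.sInf_le hmem
  omega

lemma counterexample4 (a m t d : ℕ) (ha : 2 ≤ a) (hm : 2 ≤ m) (hma : m ≤ a)
    (ht : 4*a ≤ t + 2) (htm : 2*a*m = t + m) (hd : d + a = t + 1) :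
    grd [1,a,2*a,d] (2*a*m) = m + 1 ∧ opt [1,a,2*a,d] (2*a*m) ≤ m := by
  have h1C : (1:ℕ) ∈ [1,a,2*a,d] := by simp
  have hv1 : 0 < 2*a*m := by omega
  have hones : ∀ w, w < a → grd [1,a,2*a,d] w = w :=
    grd_ones h1C (fun w hw hwa => cm4_1 (ha := ha) (ht := ht) (hd := hd) (h1 := hw) (h2 := hwa))
  constructor
  · rw [grd_step h1C hv1, cm4_4 (ha := ha) (ht := ht) (hd := hd) (h1 := by omega)]
    have hr : 2*a*m - d = a + m - 1 := by omega
    rw [hr]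
    rw [grd_step h1C (show 0 < a + m - 1 by omega),
      cm4_2 (ha := ha) (ht := ht) (hd := hd) (h1 := by omega) (h2 := by omega)]
    have hr2 : a + m - 1 - a = m - 1 := by omega
    rw [hr2, hones (m-1) (by omega)]
    omega
  · apply Nat.sInf_le
    refine mem_reprCosts4.mpr ⟨0, 0, m, 0, ?_, by omega⟩
    have : m*(2*a) = 2*a*m := by ring
    omega

theorem stmt_17 (a m : ℕ) (ha : 2 ≤ a) (hm1 : 1 < m) (hma : m ≤ a) :
    Orderly [1, a, 2 * a, m * (2 * a - 1) - (a - 1), m * (2 * a - 1) + 1,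
      (2 * m - 1) * (2 * a - 1) + 1] ∧
    ¬ Orderly [1, a, 2 * a, m * (2 * a - 1) - (a - 1)] ∧
    opt [1, a, 2 * a, m * (2 * a - 1) - (a - 1)] (2 * a * m) <
      grd [1, a, 2 * a, m * (2 * a - 1) - (a - 1)] (2 * a * m) := by
  have hm : 2 ≤ m := hm1
  have ht : 4*a ≤ m*(2*a-1) + 2 := by
    have := Nat.mul_le_mul_right (2*a-1) hm
    omega
  have htm : 2*a*m = m*(2*a-1) + m := by
    have h2 : 2*a - 1 + 1 = 2*a := by omega
    calc 2*a*m = m*(2*a) := by ring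
    _ = m*((2*a-1)+1) := by rw [h2]
    _ = m*(2*a-1) + m := by ring
  have hd : (m*(2*a-1) - (a-1)) + a = m*(2*a-1) + 1 := by omega
  have he : m*(2*a-1) + 1 = m*(2*a-1) + 1 := rfl
  have hf : ((2*m-1)*(2*a-1) + 1) + 2*a = 2*(m*(2*a-1)) + 2 := by
    have hmul : 2*m*(2*a-1) = 2*(m*(2*a-1)) := by ring
    have h := Nat.sub_mul (2*m) 1 (2*a-1)
    omega
  have hcex := counterexample4 a m (m*(2*a-1)) (m*(2*a-1) - (a-1)) ha hm hma ht htm hd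
  refine ⟨?_, ?_, ?_⟩
  · exact orderly6 a m (m*(2*a-1)) (m*(2*a-1) - (a-1)) (m*(2*a-1) + 1)
      ((2*m-1)*(2*a-1) + 1) ha hm hma ht htm hd he hf
  · intro hO
    have := hO (2*a*m) (by omega)
    omega
  · omega
end
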